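/- Define on rooted trees T ⊴ T' = T ◁ T' if T has at most one leaf, and T ⊴ T' = 0 if T has more than one leaf, where T ◁ T' = Σ_{l ∈ leaves(T)} T ↶_l T' and ∅ ◁ T' = T'. Then ⊴ is right pre-Lie: (t₁ ⊴ t₂) ⊴ t₃ − t₁ ⊴ (t₂ ⊴ t₃) = (t₂ ⊴ t₁) ⊴ t₃ − t₂ ⊴ (t₁ ⊴ t₃). -/
import Mathlib

inductive RTree (Ω : Type) : Type where
  | node : Ω → List (RTree Ω) → RTree Ω
abbrev RForest (Ω : Type) := List (RTree Ω)
abbrev FV (Ω : Type) := RForest Ω →₀ ℚ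

mutual
/-- The list of addresses of the leaves of a rooted tree. -/
def leafPaths {Ω : Type} : RTree Ω → List (List ℕ)
  | RTree.node _ [] => [[]]
  | RTree.node _ (t :: ts) => leafPathsF 0 (t :: ts)
/-- Leaf addresses of the trees of a forest, children indexed from `i`. -/
def leafPathsF {Ω : Type} : ℕ → RForest Ω → List (List ℕ)
  | _, [] => []
  | i, t :: ts => (leafPaths t).map (fun p => i :: p) ++ leafPathsF (i + 1) ts
end

/-- Total number of leaves of a forest. -/
def forestLeaves {Ω : Type} (F : RForest Ω) : ℕ :=
  (F.map (fun t => (leafPaths t).length)).sum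

/-- Graft a forest at the end of a linear tree (below, `graftLin` is only used
on trees with at most one leaf, i.e. on linear trees and the empty tree). -/
def graftLin {Ω : Type} : RForest Ω → RForest Ω → RForest Ω
  | [], G => G
  | (RTree.node a ts) :: _, G => [RTree.node a (graftLin ts G)]

/-- `T ⊴ T'` on basis trees: `0` if `T` has more than one leaf, and otherwise
the grafting of `T'` on the unique leaf of the linear tree `T` (with
`∅ ⊴ T' = T'`). -/
noncomputable def tleq {Ω : Type} (F G : RForest Ω) : FV Ω :=
  if forestLeaves F ≤ 1 then Finsupp.single (graftLin F G) 1 else 0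

/-- The bilinear extension of `⊴`. -/
noncomputable def Tleq {Ω : Type} : FV Ω →ₗ[ℚ] FV Ω →ₗ[ℚ] FV Ω :=
  (Finsupp.lift (FV Ω →ₗ[ℚ] FV Ω) ℚ (RForest Ω))
    (fun F => (Finsupp.lift (FV Ω) ℚ (RForest Ω)) (tleq F))

def IsTree {Ω : Type} (F : RForest Ω) : Prop := F.length ≤ 1

-- aux lemmas
lemma leafPathsF_length {Ω : Type} : ∀ (i : ℕ) (ts : RForest Ω),
    (leafPathsF i ts).length = forestLeaves ts
  | _, [] => rfl
  | i, t :: ts => by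
      simp [leafPathsF, forestLeaves, leafPathsF_length (i+1) ts]

lemma forestLeaves_cons {Ω : Type} (t : RTree Ω) (ts : RForest Ω) :
    forestLeaves (t :: ts) = (leafPaths t).length + forestLeaves ts := by
  simp [forestLeaves]

lemma leafPaths_node {Ω : Type} (a : Ω) (ts : RForest Ω) (h : ts ≠ []) :
    (leafPaths (RTree.node a ts)).length = forestLeaves ts := by
  cases ts with
  | nil => exact absurd rfl h
  | cons t ts => rw [leafPaths, leafPathsF_length]

lemma leafPaths_length_pos {Ω : Type} : ∀ t : RTree Ω, 0 < (leafPaths t).length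
  | RTree.node a [] => by simp [leafPaths]
  | RTree.node a (t :: ts) => by
      have := leafPaths_length_pos t
      simp [leafPaths, leafPathsF]
      omega

lemma graftLin_assoc {Ω : Type} : ∀ (F G H : RForest Ω),
    graftLin (graftLin F G) H = graftLin F (graftLin G H)
  | [], G, H => by simp [graftLin]
  | RTree.node a ts :: rest, G, H => by
      simp [graftLin, graftLin_assoc ts G H]

lemma graftLin_ne_nil {Ω : Type} (F G : RForest Ω) (h : F ≠ []) :
    graftLin F G ≠ [] := by
  cases F with
  | nil => exact absurd rfl h
  | cons t ts => cases t; simp [graftLin]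

lemma forestLeaves_singleton {Ω : Type} (t : RTree Ω) :
    forestLeaves [t] = (leafPaths t).length := by simp [forestLeaves]

lemma graftLin_leaves_iff {Ω : Type} : ∀ (F G : RForest Ω),
    forestLeaves F ≤ 1 → (forestLeaves (graftLin F G) ≤ 1 ↔ forestLeaves G ≤ 1)
  | [], G, _ => by simp [graftLin]
  | RTree.node a [] :: rest, G, h => by
      simp only [graftLin, forestLeaves_singleton]
      cases G with
      | nil => simp [leafPaths, forestLeaves]
      | cons g gs => rw [leafPaths_node a _ (by simp)]
  | RTree.node a (u :: us) :: rest, G, h => by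
      have h1 : forestLeaves (u :: us) ≤ 1 := by
        rw [forestLeaves_cons] at h
        rw [← leafPaths_node a (u :: us) (by simp)]; omega
      simp only [graftLin, forestLeaves_singleton]
      rw [leafPaths_node a _ (graftLin_ne_nil _ _ (by simp))]
      exact graftLin_leaves_iff (u :: us) G h1

lemma Tleq_single_single {Ω : Type} (F G : RForest Ω) :
    Tleq (Finsupp.single F (1:ℚ)) (Finsupp.single G 1) = tleq F G := by
  simp [Tleq]

/-- the product `⊴` is right pre-Lie:
`(t₁⊴t₂)⊴t₃ − t₁⊴(t₂⊴t₃) = (t₂⊴t₁)⊴t₃ − t₂⊴(t₁⊴t₃)` for all trees. -/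
theorem tleq_right_preLie {Ω : Type} :
    ∀ t₁ t₂ t₃ : RForest Ω, IsTree t₁ → IsTree t₂ → IsTree t₃ →
      Tleq (Tleq (Finsupp.single t₁ 1) (Finsupp.single t₂ 1)) (Finsupp.single t₃ 1)
          - Tleq (Finsupp.single t₁ 1) (Tleq (Finsupp.single t₂ 1) (Finsupp.single t₃ 1))
        = Tleq (Tleq (Finsupp.single t₂ 1) (Finsupp.single t₁ 1)) (Finsupp.single t₃ 1)
          - Tleq (Finsupp.single t₂ 1) (Tleq (Finsupp.single t₁ 1) (Finsupp.single t₃ 1)) := by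
  intro t₁ t₂ t₃ _ _ _
  have key : ∀ F G H : RForest Ω,
      Tleq (Tleq (Finsupp.single F (1:ℚ)) (Finsupp.single G 1)) (Finsupp.single H 1)
        - Tleq (Finsupp.single F 1) (Tleq (Finsupp.single G 1) (Finsupp.single H 1)) = 0 ∨
      ¬ forestLeaves F ≤ 1 ∨ ¬ forestLeaves G ≤ 1 := by
    intro F G H
    by_cases hF : forestLeaves F ≤ 1
    · by_cases hG : forestLeaves G ≤ 1
      · left
        have hFG : forestLeaves (graftLin F G) ≤ 1 := (graftLin_leaves_iff F G hF).2 hG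
        rw [Tleq_single_single, Tleq_single_single, tleq, if_pos hF, tleq, if_pos hG,
          Tleq_single_single, Tleq_single_single, tleq, if_pos hFG, tleq, if_pos hF,
          graftLin_assoc, sub_self]
      · right; right; exact hG
    · right; left; exact hF
  have zeroes : ∀ F G H : RForest Ω, ¬ forestLeaves F ≤ 1 ∨ ¬ forestLeaves G ≤ 1 →
      Tleq (Tleq (Finsupp.single F (1:ℚ)) (Finsupp.single G 1)) (Finsupp.single H 1) = 0 ∧
      Tleq (Finsupp.single F 1) (Tleq (Finsupp.single G 1) (Finsupp.single H 1)) = 0 := by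
    intro F G H hcase
    by_cases hF : forestLeaves F ≤ 1
    · have hG : ¬ forestLeaves G ≤ 1 := by tauto
      constructor
      · rw [Tleq_single_single, tleq, if_pos hF, Tleq_single_single, tleq,
          if_neg (fun hh => hG ((graftLin_leaves_iff F G hF).1 hh))]
      · rw [Tleq_single_single, tleq, if_neg hG, map_zero]
    · constructor
      · rw [Tleq_single_single, tleq, if_neg hF, map_zero, LinearMap.zero_apply]
      · by_cases hG : forestLeaves G ≤ 1
        · rw [Tleq_single_single, tleq, if_pos hG, Tleq_single_single, tleq, if_neg hF]
        · rw [Tleq_single_single, tleq, if_neg hG, map_zero]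
  rcases key t₁ t₂ t₃ with h | h
  · rcases key t₂ t₁ t₃ with h' | h'
    · rw [h, h']
    · obtain ⟨e1, e2⟩ := zeroes t₂ t₁ t₃ h'
      rw [h, e1, e2, sub_self]
  · obtain ⟨e1, e2⟩ := zeroes t₁ t₂ t₃ h
    obtain ⟨e1', e2'⟩ := zeroes t₂ t₁ t₃ (by tauto)
    rw [e1, e2, e1', e2']
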